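/- Let m, n ≥ 1 and let B¹,…,Bⁿ be m×m real matrices, each skew-symmetric and orthogonal, with BⁱBʲ = −BʲBⁱ for i ≠ j; set Q = m+2n. Let φ(x,t) = ‖x‖⁴ + 16‖t‖² and let A = (a_{ij}) be a symmetric matrix-valued function with ⟨A(p)ξ,ξ⟩ ≤ Λ‖ξ‖² for all ξ ∈ ℝᵐ. Then for every p = (x,t), L_A φ(p) = 4‖x‖² Tr(A(p)) + 8⟨A(p)x, x⟩ + 8Σ_{k=1}^n ⟨A(p)Bᵏx, Bᵏx⟩ ≤ 4Λ(m+2+2n)‖x‖²; in particular L_A φ(p) ≤ 4(Q+2)Λ for every p in the unit d-ball B₁(0) = {(x,t) : ‖x‖⁴+16‖t‖² < 1}. -/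

import Mathlib

open Matrix MeasureTheory
open scoped BigOperators

noncomputable section

/-- The underlying space of the prototype H-type group: `ℝᵐ × ℝⁿ`. -/
abbrev G (m n : ℕ) : Type := (Fin m → ℝ) × (Fin n → ℝ)

/-- Squared Euclidean norm on `ℝᵏ`. -/
def sqnorm {k : ℕ} (x : Fin k → ℝ) : ℝ := ∑ i, x i ^ 2

/-- The homogeneous norm `d(x,t) = (‖x‖⁴ + 16‖t‖²)^(1/4)`. -/
def hnorm {m n : ℕ} (p : G m n) : ℝ := (sqnorm p.1 ^ 2 + 16 * sqnorm p.2) ^ (4⁻¹ : ℝ)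

/-- The group law `(x,t)∘(y,s) = (x+y, t+s+½⟨Bᵏx,y⟩)`. -/
def gmul {m n : ℕ} (B : Fin n → Matrix (Fin m) (Fin m) ℝ) (p q : G m n) : G m n :=
  (p.1 + q.1, fun k => p.2 k + q.2 k + (1 / 2) * ((B k).mulVec p.1 ⬝ᵥ q.1))

/-- The group inverse `p⁻¹ = -p`. -/
def ginv {m n : ℕ} (p : G m n) : G m n := (-p.1, -p.2)

/-- The `d`-ball `B_R(p) = {q : d(p⁻¹∘q) < R}`. -/
def dball {m n : ℕ} (B : Fin n → Matrix (Fin m) (Fin m) ℝ) (p : G m n) (R : ℝ) :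
    Set (G m n) := {q | hnorm (gmul B (ginv p) q) < R}

/-- The vector of the horizontal field `X_j` at `p`:
`X_j = ∂_{x_j} + ½ Σ_k (Bᵏx)_j ∂_{t_k}`. -/
def Xvec {m n : ℕ} (B : Fin n → Matrix (Fin m) (Fin m) ℝ) (j : Fin m) (p : G m n) : G m n :=
  (fun i => if i = j then 1 else 0, fun k => (1 / 2) * (B k).mulVec p.1 j)

/-- The horizontal derivative `X_j u (p)`. -/
def Xop {m n : ℕ} (B : Fin n → Matrix (Fin m) (Fin m) ℝ) (j : Fin m) (u : G m n → ℝ)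
    (p : G m n) : ℝ := fderiv ℝ u p (Xvec B j p)

/-- The horizontally elliptic operator `L_A u = Σ_{i,j} a_{ij} X_i X_j u`. -/
def Lop {m n : ℕ} (B : Fin n → Matrix (Fin m) (Fin m) ℝ)
    (A : G m n → Matrix (Fin m) (Fin m) ℝ) (u : G m n → ℝ) (p : G m n) : ℝ :=
  ∑ i, ∑ j, A p i j * Xop B i (Xop B j u) p

/-- The defining conditions on the matrices `B¹,…,Bⁿ` of a prototype H-type group:
skew-symmetric, orthogonal, pairwise anticommuting. -/
def HTypeData {m n : ℕ} (B : Fin n → Matrix (Fin m) (Fin m) ℝ) : Prop :=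
  (∀ k, (B k)ᵀ = -(B k)) ∧ (∀ k, (B k)ᵀ * B k = 1) ∧
    (∀ i j, i ≠ j → B i * B j = -(B j * B i))

/-- The quadratic form `⟨Aξ, ξ⟩`. -/
def quadForm {m : ℕ} (A : Matrix (Fin m) (Fin m) ℝ) (ξ : Fin m → ℝ) : ℝ :=
  A.mulVec ξ ⬝ᵥ ξ

/-- Uniform ellipticity: `λ‖ξ‖² ≤ ⟨Aξ,ξ⟩ ≤ Λ‖ξ‖²`. -/
def UnifElliptic {m : ℕ} (lam Lam : ℝ) (A : Matrix (Fin m) (Fin m) ℝ) : Prop :=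
  ∀ ξ : Fin m → ℝ, lam * sqnorm ξ ≤ quadForm A ξ ∧ quadForm A ξ ≤ Lam * sqnorm ξ

/-- The δ-Landis condition
`Tr(A) + (Q+2−m)·max_{‖ξ‖=1}⟨Aξ,ξ⟩ ≤ (Q+4−δ)·min_{‖ξ‖=1}⟨Aξ,ξ⟩`,
stated equivalently via universal quantification over unit vectors. -/
def Landis {m : ℕ} (Q δ : ℝ) (A : Matrix (Fin m) (Fin m) ℝ) : Prop :=
  ∀ ξ ζ : Fin m → ℝ, sqnorm ξ = 1 → sqnorm ζ = 1 →
    A.trace + (Q + 2 - m) * quadForm A ξ ≤ (Q + 4 - δ) * quadForm A ζ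

/-- `φ = d⁴`. -/
def phi {m n : ℕ} (p : G m n) : ℝ := sqnorm p.1 ^ 2 + 16 * sqnorm p.2

/-!
Since `φ` is a polynomial, `X_i X_j φ` can be computed explicitly: it equals
`8 x_i x_j + 4‖x‖² δ_ij + 8 Σ_k (Bᵏx)_i (Bᵏx)_j + 16 Σ_k t_k Bᵏ_ji`. Pairing this horizontal
Hessian with `A` gives the trace formula; the `t`-terms drop out because `Tr(A Bᵏ) = 0` for
symmetric `A` and skew-symmetric `Bᵏ`. Each of the remaining `m + 2 + 2n` "diagonal" terms is
at most `Λ‖x‖²`, using that the `Bᵏ` are isometries, and `‖x‖² ≤ 1` on the unit ball.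
-/

open Finset

theorem sqnorm_eq_dotProduct {k : ℕ} (x : Fin k → ℝ) : sqnorm x = x ⬝ᵥ x := by
  simp [sqnorm, dotProduct, sq]

theorem sqnorm_nonneg {k : ℕ} (x : Fin k → ℝ) : 0 ≤ sqnorm x :=
  sum_nonneg fun i _ => sq_nonneg (x i)

theorem sqnorm_mulVec_of_transpose_mul_self {k : ℕ} {M : Matrix (Fin k) (Fin k) ℝ}
    (hM : Mᵀ * M = 1) (x : Fin k → ℝ) : sqnorm (M *ᵥ x) = sqnorm x := by
  rw [sqnorm_eq_dotProduct, sqnorm_eq_dotProduct, dotProduct_mulVec, ← mulVec_transpose,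
    mulVec_mulVec, hM, one_mulVec]

theorem differentiable_sqnorm {k : ℕ} : Differentiable ℝ (sqnorm (k := k)) := by
  unfold sqnorm; fun_prop

theorem fderiv_sqnorm_apply {k : ℕ} (x v : Fin k → ℝ) :
    fderiv ℝ sqnorm x v = 2 * (x ⬝ᵥ v) := by
  unfold sqnorm
  simp (disch := fun_prop) [fderiv_fun_sum, fderiv_fun_pow, fderiv_apply, dotProduct,
    mul_sum, mul_assoc]

theorem trace_mul_vecMulVec_self {k : ℕ} (A : Matrix (Fin k) (Fin k) ℝ) (x : Fin k → ℝ) :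
    (A * vecMulVec x x).trace = quadForm A x := by
  rw [mul_vecMulVec, trace_vecMulVec, quadForm]

theorem trace_mul_eq_zero_of_isSymm_of_transpose_eq_neg {ι R : Type*} [Fintype ι] [CommRing R]
    [IsAddTorsionFree R] {A M : Matrix ι ι R} (hA : A.IsSymm) (hM : Mᵀ = -M) :
    (A * M).trace = 0 := by
  rw [← self_eq_neg]
  calc (A * M).trace = (A * M)ᵀ.trace := (trace_transpose _).symm
    _ = -(A * M).trace := by
      rw [transpose_mul, hM, hA.eq, neg_mul, trace_neg, trace_mul_comm]

theorem trace_le_of_quadForm_le {k : ℕ} {A : Matrix (Fin k) (Fin k) ℝ} {Lam : ℝ}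
    (h : ∀ ξ, quadForm A ξ ≤ Lam * sqnorm ξ) : A.trace ≤ k * Lam := by
  have hdiag (i : Fin k) : A i i ≤ Lam := by
    simpa [quadForm, sqnorm, Pi.single_apply] using h (Pi.single i 1)
  calc A.trace = ∑ i, A i i := rfl
    _ ≤ ∑ _i : Fin k, Lam := sum_le_sum fun i _ => hdiag i
    _ = k * Lam := by simp

section HorizontalCalculus

variable {m n : ℕ}

theorem Xvec_eq_single (B : Fin n → Matrix (Fin m) (Fin m) ℝ) (j : Fin m) (p : G m n) :
    Xvec B j p = (Pi.single j 1, fun k => (1 / 2) * (B k *ᵥ p.1) j) := by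
  ext i <;> simp [Xvec, Pi.single_apply]

theorem fderiv_phi_apply (p v : G m n) :
    fderiv ℝ phi p v = 4 * sqnorm p.1 * (p.1 ⬝ᵥ v.1) + 32 * (p.2 ⬝ᵥ v.2) := by
  have h1 := ((differentiable_sqnorm p.1).hasFDerivAt.comp p hasFDerivAt_fst).pow 2
  have h2 := ((differentiable_sqnorm p.2).hasFDerivAt.comp p hasFDerivAt_snd).const_mul 16
  have h : HasFDerivAt (phi (m := m) (n := n)) _ p := h1.fun_add h2
  rw [h.fderiv]
  simp only [Function.comp_apply, Nat.add_one_sub_one, pow_one, nsmul_eq_mul, Nat.cast_ofNat,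
    _root_.add_apply, _root_.smul_apply, ContinuousLinearMap.comp_apply,
    ContinuousLinearMap.coe_fst', ContinuousLinearMap.coe_snd', fderiv_sqnorm_apply, smul_eq_mul]
  ring

theorem Xop_phi (B : Fin n → Matrix (Fin m) (Fin m) ℝ) (j : Fin m) (p : G m n) :
    Xop B j phi p = 4 * sqnorm p.1 * p.1 j + 16 * ∑ k, p.2 k * (B k *ᵥ p.1) j := by
  rw [Xop, fderiv_phi_apply, Xvec_eq_single, dotProduct_single_one]
  simp only [dotProduct, mul_sum]
  congr 1
  exact sum_congr rfl fun k _ => by ring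

theorem Xop_Xop_phi (B : Fin n → Matrix (Fin m) (Fin m) ℝ) (i j : Fin m) (p : G m n) :
    Xop B i (Xop B j phi) p =
      8 * p.1 i * p.1 j + 4 * sqnorm p.1 * (1 : Matrix (Fin m) (Fin m) ℝ) i j
        + 8 * ∑ k, (B k *ᵥ p.1) i * (B k *ᵥ p.1) j + 16 * ∑ k, p.2 k * B k j i := by
  have hfst (l : Fin m) :=
    (hasFDerivAt_apply (𝕜 := ℝ) l p.1).comp p (hasFDerivAt_fst (p := p))
  have hsnd (k : Fin n) :=
    (hasFDerivAt_apply (𝕜 := ℝ) k p.2).comp p (hasFDerivAt_snd (p := p))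
  have hmulVec (k : Fin n) := (hasFDerivAt_apply (𝕜 := ℝ) j _).comp p
    ((LinearMap.toContinuousLinearMap (𝕜 := ℝ) (B k).mulVecLin).hasFDerivAt (x := p.1) |>.comp p
      (hasFDerivAt_fst (p := p)))
  have hsq := (differentiable_sqnorm p.1).hasFDerivAt.comp p (hasFDerivAt_fst (p := p))
  have h : HasFDerivAt (𝕜 := ℝ)
      (fun q : G m n => 4 * sqnorm q.1 * q.1 j + 16 * ∑ k, q.2 k * (B k *ᵥ q.1) j) _ p :=
    ((hsq.const_mul 4).fun_mul (hfst j)).fun_add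
      ((HasFDerivAt.fun_sum (u := univ) fun k _ => (hsnd k).fun_mul (hmulVec k)).const_mul 16)
  rw [Xop, funext (Xop_phi B j), h.fderiv, Xvec_eq_single]
  simp only [Function.comp_apply, LinearMap.coe_toContinuousLinearMap', mulVecBilin_apply, one_div,
    _root_.add_apply, _root_.smul_apply, ContinuousLinearMap.comp_apply, ContinuousLinearMap.coe_fst',
    ContinuousLinearMap.coe_snd', ContinuousLinearMap.proj_apply, smul_eq_mul, fderiv_sqnorm_apply,
    dotProduct_single_one, _root_.sum_apply, mulVec_single_one, col_apply]
  have hone : (Pi.single i 1 : Fin m → ℝ) j = (1 : Matrix (Fin m) (Fin m) ℝ) i j := by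
    simp [Pi.single_apply, one_apply, eq_comm]
  have hB : ∑ k, (p.2 k * B k j i + (B k *ᵥ p.1) j * (2⁻¹ * (B k *ᵥ p.1) i))
      = ∑ k, p.2 k * B k j i + 2⁻¹ * ∑ k, (B k *ᵥ p.1) i * (B k *ᵥ p.1) j := by
    rw [sum_add_distrib, mul_sum]
    exact congrArg _ (sum_congr rfl fun k _ => by ring)
  rw [hone, hB]
  ring

def horizontalHessian (B : Fin n → Matrix (Fin m) (Fin m) ℝ) (u : G m n → ℝ) (p : G m n) :
    Matrix (Fin m) (Fin m) ℝ :=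
  of fun i j => Xop B i (Xop B j u) p

theorem Lop_eq_trace_mul_transpose_horizontalHessian (B : Fin n → Matrix (Fin m) (Fin m) ℝ)
    (A : G m n → Matrix (Fin m) (Fin m) ℝ) (u : G m n → ℝ) (p : G m n) :
    Lop B A u p = (A p * (horizontalHessian B u p)ᵀ).trace := by
  simp [Lop, horizontalHessian, trace, mul_apply]

theorem horizontalHessian_phi (B : Fin n → Matrix (Fin m) (Fin m) ℝ) (p : G m n) :
    horizontalHessian B phi p =
      (8 : ℝ) • vecMulVec p.1 p.1 + (4 * sqnorm p.1) • 1
        + (8 : ℝ) • ∑ k, vecMulVec (B k *ᵥ p.1) (B k *ᵥ p.1) + (16 : ℝ) • ∑ k, p.2 k • (B k)ᵀ := by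
  ext i j
  simp [horizontalHessian, Xop_Xop_phi, vecMulVec_apply, Matrix.sum_apply, mul_assoc]

theorem Lop_phi (B : Fin n → Matrix (Fin m) (Fin m) ℝ) (hskew : ∀ k, (B k)ᵀ = -B k)
    (A : G m n → Matrix (Fin m) (Fin m) ℝ) (p : G m n) (hA : (A p).IsSymm) :
    Lop B A phi p = 4 * sqnorm p.1 * (A p).trace + 8 * quadForm (A p) p.1
      + 8 * ∑ k, quadForm (A p) (B k *ᵥ p.1) := by
  rw [Lop_eq_trace_mul_transpose_horizontalHessian, horizontalHessian_phi]
  simp only [transpose_add, transpose_smul, transpose_vecMulVec, transpose_one, transpose_sum,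
    transpose_transpose, Matrix.mul_add, Algebra.mul_smul_comm, mul_one, Matrix.mul_sum, trace_add,
    trace_smul, trace_sum, trace_mul_vecMulVec_self, smul_eq_mul,
    trace_mul_eq_zero_of_isSymm_of_transpose_eq_neg hA (hskew _), mul_zero, sum_const_zero, add_zero]
  ring

theorem Lop_phi_le (B : Fin n → Matrix (Fin m) (Fin m) ℝ) (hskew : ∀ k, (B k)ᵀ = -B k)
    (horth : ∀ k, (B k)ᵀ * B k = 1) (A : G m n → Matrix (Fin m) (Fin m) ℝ) (p : G m n)
    (hA : (A p).IsSymm) {Lam : ℝ} (hupper : ∀ ξ, quadForm (A p) ξ ≤ Lam * sqnorm ξ) :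
    Lop B A phi p ≤ 4 * Lam * ((m : ℝ) + 2 + 2 * n) * sqnorm p.1 := by
  have htrace := trace_le_of_quadForm_le hupper
  have hBx (k : Fin n) : quadForm (A p) (B k *ᵥ p.1) ≤ Lam * sqnorm p.1 := by
    simpa [sqnorm_mulVec_of_transpose_mul_self (horth k)] using hupper (B k *ᵥ p.1)
  have hsum : ∑ k, quadForm (A p) (B k *ᵥ p.1) ≤ n * (Lam * sqnorm p.1) := by
    simpa using sum_le_sum fun k (_ : k ∈ univ) => hBx k
  rw [Lop_phi B hskew A p hA]
  nlinarith [hupper p.1, mul_le_mul_of_nonneg_left htrace (sqnorm_nonneg p.1)]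

theorem sqnorm_fst_le_one_of_phi_lt_one {p : G m n} (h : phi p < 1) : sqnorm p.1 ≤ 1 := by
  unfold phi at h
  nlinarith [sqnorm_nonneg p.2]

end HorizontalCalculus

theorem Lop_phi_formula_and_bound_general
    (m n : ℕ)
    (B : Fin n → Matrix (Fin m) (Fin m) ℝ) (hB : HTypeData B)
    (Lam : ℝ) (hLam : 0 < Lam)
    (A : G m n → Matrix (Fin m) (Fin m) ℝ) (hsymm : ∀ p, (A p).IsSymm)
    (hupper : ∀ p ξ, quadForm (A p) ξ ≤ Lam * sqnorm ξ) :
    ∀ p : G m n,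
      Lop B A phi p =
          4 * sqnorm p.1 * (A p).trace + 8 * quadForm (A p) p.1
            + 8 * ∑ k, quadForm (A p) ((B k).mulVec p.1) ∧
      Lop B A phi p ≤ 4 * Lam * ((m : ℝ) + 2 + 2 * n) * sqnorm p.1 ∧
      (sqnorm p.1 ^ 2 + 16 * sqnorm p.2 < 1 →
        Lop B A phi p ≤ 4 * (((m : ℝ) + 2 * n) + 2) * Lam) := by
  intro p
  have hbound := Lop_phi_le B hB.1 hB.2.1 A p (hsymm p) (hupper p)
  refine ⟨Lop_phi B hB.1 A p (hsymm p), hbound, fun hball => ?_⟩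
  calc Lop B A phi p ≤ 4 * Lam * ((m : ℝ) + 2 + 2 * n) * sqnorm p.1 := hbound
    _ ≤ 4 * Lam * ((m : ℝ) + 2 + 2 * n) * 1 := by
      gcongr; exact sqnorm_fst_le_one_of_phi_lt_one hball
    _ = 4 * (((m : ℝ) + 2 * n) + 2) * Lam := by ring

/-- For `φ(x,t) = ‖x‖⁴ + 16‖t‖²` and symmetric `A` with
`⟨A(p)ξ,ξ⟩ ≤ Λ‖ξ‖²`:
`L_A φ(p) = 4‖x‖²Tr(A(p)) + 8⟨A(p)x,x⟩ + 8Σ_k⟨A(p)Bᵏx,Bᵏx⟩ ≤ 4Λ(m+2+2n)‖x‖²`,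
and `L_A φ(p) ≤ 4(Q+2)Λ` on the unit `d`-ball. -/
theorem Lop_phi_formula_and_bound
    (m n : ℕ) (hm : 1 ≤ m) (hn : 1 ≤ n)
    (B : Fin n → Matrix (Fin m) (Fin m) ℝ) (hB : HTypeData B)
    (Lam : ℝ) (hLam : 0 < Lam)
    (A : G m n → Matrix (Fin m) (Fin m) ℝ) (hsymm : ∀ p, (A p).IsSymm)
    (hupper : ∀ p ξ, quadForm (A p) ξ ≤ Lam * sqnorm ξ) :
    ∀ p : G m n,
      Lop B A phi p =
          4 * sqnorm p.1 * (A p).trace + 8 * quadForm (A p) p.1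
            + 8 * ∑ k, quadForm (A p) ((B k).mulVec p.1) ∧
      Lop B A phi p ≤ 4 * Lam * ((m : ℝ) + 2 + 2 * n) * sqnorm p.1 ∧
      (sqnorm p.1 ^ 2 + 16 * sqnorm p.2 < 1 →
        Lop B A phi p ≤ 4 * (((m : ℝ) + 2 * n) + 2) * Lam) :=
  Lop_phi_formula_and_bound_general m n B hB Lam hLam A hsymm hupper

end
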